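/- arXiv:2605.20281 — 2 statements merged into one kernel-verified Lean document; each statement's English description precedes it below -/
import Mathlib

section
/- Fix κ > 0, λ̄ ∈ (0,1], σ²_y > 0, σ²_inf > 0, σ²_u > 0. As a function of x = φρ ∈ [0,1), the bound η(x) = ((1+x)λ̄κ)²σ²_inf / (((1-x)κ)²σ²_y + ((1+x)λ̄κ)²σ²_inf + σ²_u) is strictly increasing in x. -/
theorem stmt_8 (κ lam σy2 σinf2 σu2 : ℝ) (hκ : 0 < κ)
    (hlam : lam ∈ Set.Ioc (0:ℝ) 1)
    (hy : 0 < σy2) (hi : 0 < σinf2) (hu : 0 < σu2) :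
    StrictMonoOn
      (fun x : ℝ =>
        ((1 + x) * lam * κ) ^ 2 * σinf2 /
          (((1 - x) * κ) ^ 2 * σy2 + ((1 + x) * lam * κ) ^ 2 * σinf2 + σu2))
      (Set.Ico (0:ℝ) 1) := by
  obtain ⟨hl0, hl1⟩ := hlam
  intro a ha b hb hab
  obtain ⟨ha0, ha1⟩ := ha
  obtain ⟨hb0, hb1⟩ := hb
  have hda : 0 < ((1 - a) * κ) ^ 2 * σy2 + ((1 + a) * lam * κ) ^ 2 * σinf2 + σu2 := by
    positivity
  have hdb : 0 < ((1 - b) * κ) ^ 2 * σy2 + ((1 + b) * lam * κ) ^ 2 * σinf2 + σu2 := by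
    positivity
  simp only
  rw [div_lt_div_iff₀ hda hdb]
  have hA : ((1 + a) * lam * κ) ^ 2 < ((1 + b) * lam * κ) ^ 2 := by
    apply pow_lt_pow_left₀ _ (by positivity) (by norm_num)
    have : (1 + a) * (lam * κ) < (1 + b) * (lam * κ) := by
      apply mul_lt_mul_of_pos_right (by linarith) (by positivity)
    linarith [this, mul_assoc (1+a) lam κ, mul_assoc (1+b) lam κ]
  have hB : ((1 - b) * κ) ^ 2 < ((1 - a) * κ) ^ 2 := by
    apply pow_lt_pow_left₀ _ (mul_nonneg (by linarith) hκ.le) (by norm_num)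
    apply mul_lt_mul_of_pos_right (by linarith) hκ
  have hAa : 0 ≤ ((1 + a) * lam * κ) ^ 2 := sq_nonneg _
  have hBb : 0 ≤ ((1 - b) * κ) ^ 2 := sq_nonneg _
  generalize hAadef : ((1 + a) * lam * κ) ^ 2 = Aa at *
  generalize hAbdef : ((1 + b) * lam * κ) ^ 2 = Ab at *
  generalize hBadef : ((1 - a) * κ) ^ 2 = Ba at *
  generalize hBbdef : ((1 - b) * κ) ^ 2 = Bb at *
  have h1 : Aa * Bb < Ab * Ba := by nlinarith
  nlinarith [mul_lt_mul_of_pos_right h1 (mul_pos hi hy),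
    mul_lt_mul_of_pos_right hA (mul_pos hi hu)]
end

section
/- The map F : (0,1)×(0,1)×(0,1] → ℝ², F(θ,β,λ̄) = ((1-θ)(1-βθ)/θ, λ̄(1-θ)(1-βθ)/θ), has the property that for fixed θ,β the second coordinate determines λ̄ uniquely, and for fixed β, λ̄ the map θ ↦ first coordinate is injective on (0,1). -/
theorem stmt_12
    (F : ℝ → ℝ → ℝ → ℝ × ℝ)
    (hF : ∀ θ β lam, F θ β lam =
      ((1 - θ) * (1 - β * θ) / θ, lam * ((1 - θ) * (1 - β * θ) / θ))) :
    (∀ θ ∈ Set.Ioo (0:ℝ) 1, ∀ β ∈ Set.Ioo (0:ℝ) 1,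
      ∀ l₁ ∈ Set.Ioc (0:ℝ) 1, ∀ l₂ ∈ Set.Ioc (0:ℝ) 1,
        (F θ β l₁).2 = (F θ β l₂).2 → l₁ = l₂) ∧
    (∀ β ∈ Set.Ioo (0:ℝ) 1, ∀ lam ∈ Set.Ioc (0:ℝ) 1,
      ∀ θ₁ ∈ Set.Ioo (0:ℝ) 1, ∀ θ₂ ∈ Set.Ioo (0:ℝ) 1,
        (F θ₁ β lam).1 = (F θ₂ β lam).1 → θ₁ = θ₂) := by
  constructor
  · intro θ hθ β hβ l₁ hl₁ l₂ hl₂ h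
    simp only [hF] at h
    have hκ : (1 - θ) * (1 - β * θ) / θ > 0 := by
      apply div_pos
      · apply mul_pos <;> nlinarith [hθ.1, hθ.2, hβ.1, hβ.2]
      · exact hθ.1
    exact mul_right_cancel₀ (ne_of_gt hκ) h
  · intro β hβ lam hlam θ₁ hθ₁ θ₂ hθ₂ h
    simp only [hF] at h
    have h1 := hθ₁.1; have h2 := hθ₁.2
    have h3 := hθ₂.1; have h4 := hθ₂.2
    have hb1 := hβ.1; have hb2 := hβ.2
    rw [div_eq_div_iff (ne_of_gt h1) (ne_of_gt h3)] at h
    have key : (θ₂ - θ₁) * (1 - β * θ₁ * θ₂) = 0 := by linear_combination h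
    have ht : θ₁ * θ₂ < 1 := by nlinarith
    have hpos : 1 - β * θ₁ * θ₂ > 0 := by nlinarith [mul_pos h1 h3]
    have := mul_eq_zero.mp key
    rcases this with h' | h'
    · linarith
    · linarith
end
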